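/- arXiv:1604.03154 — 3 statements merged into one kernel-verified Lean document; each statement's English description precedes it below -/
import Mathlib

section
/- Generalized Dini theorem: Let d be a distance on a set X, let Q be a compact topological space, let f : Q → X be continuous with respect to the lower-ball topology X_•, and let (g_λ) be a sup-d-Cauchy net of functions Q → X, each continuous with respect to the upper-ball topology X^•. Then for each p ∈ Q the limit lim_λ d(f(p), g_λ(p)) exists in [0,∞], and lim_λ sup_{p∈Q} d(f(p), g_λ(p)) = sup_{p∈Q} lim_λ d(f(p), g_λ(p)). -/
open TopologicalSpace ENNReal

/-- A (possibly non-reflexive) transitive relation, used to index nets. -/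
def TransRel {ι : Type} (r : ι → ι → Prop) : Prop := ∀ a b c, r a b → r b c → r a c

/-- Directedness of the index relation of a net. -/
def DirRel {ι : Type} (r : ι → ι → Prop) : Prop := ∀ a b, ∃ c, r a c ∧ r b c

/-- `liminf` of a net of extended nonnegative reals over a directed index:
`sup_γ inf_{γ ≺ δ} a δ`. -/
noncomputable def liminfN {ι : Type} (r : ι → ι → Prop) (a : ι → ℝ≥0∞) : ℝ≥0∞ :=
  ⨆ γ, ⨅ δ, ⨅ _ : r γ δ, a δ

/-- `limsup` of a net of extended nonnegative reals over a directed index: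
`inf_γ sup_{γ ≺ δ} a δ`. -/
noncomputable def limsupN {ι : Type} (r : ι → ι → Prop) (a : ι → ℝ≥0∞) : ℝ≥0∞ :=
  ⨅ γ, ⨆ δ, ⨆ _ : r γ δ, a δ

/-- Convergence of a net in `ℝ≥0∞` to `L`. -/
def TendstoN {ι : Type} (r : ι → ι → Prop) (a : ι → ℝ≥0∞) (L : ℝ≥0∞) : Prop :=
  liminfN r a = L ∧ limsupN r a = L

/-- Convergence of a real-valued net. -/
def TendstoRN {ι : Type} (r : ι → ι → Prop) (a : ι → ℝ) (L : ℝ) : Prop :=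
  ∀ ε : ℝ, 0 < ε → ∃ γ₀, ∀ γ, r γ₀ γ → |a γ - L| < ε

/-- A distance: a `[0,∞]`-valued function satisfying the triangle inequality. -/
def IsDistance {X : Type} (d : X → X → ℝ≥0∞) : Prop :=
  ∀ x y z, d x z ≤ d x y + d y z

/-- `d`-Cauchy net: `lim_γ sup_{γ ≺ δ} d(x_γ, x_δ) = 0`. -/
def DCauchyN {ι X : Type} (r : ι → ι → Prop) (d : X → X → ℝ≥0∞) (x : ι → X) : Prop :=
  ∀ ε : ℝ≥0∞, 0 < ε → ∃ γ₀, ∀ γ δ, r γ₀ γ → r γ δ → d (x γ) (x δ) < ε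

/-- `d`-dominating net: `sup_γ lim_{γ ≺ δ} d(x_γ, x_δ) = 0`. -/
def DDomN {ι X : Type} (r : ι → ι → Prop) (d : X → X → ℝ≥0∞) (x : ι → X) : Prop :=
  ∀ γ, ∀ ε : ℝ≥0∞, 0 < ε → ∃ δ₀, r γ δ₀ ∧ ∀ δ, r δ₀ δ → d (x γ) (x δ) < ε

/-- `x_λ →^◦ l` with holes tested against points of `T`:
`liminf_λ d(x_λ, c) ≥ d(l, c)` for all `c ∈ T`. -/
def UpperConvOn {ι X : Type} (r : ι → ι → Prop) (d : X → X → ℝ≥0∞) (T : Set X)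
    (x : ι → X) (l : X) : Prop :=
  ∀ c ∈ T, d l c ≤ liminfN r fun γ => d (x γ) c

/-- `x_λ →_◦ l` with holes tested against points of `T`:
`liminf_λ d(c, x_λ) ≥ d(c, l)` for all `c ∈ T`. -/
def LowerConvOn {ι X : Type} (r : ι → ι → Prop) (d : X → X → ℝ≥0∞) (T : Set X)
    (x : ι → X) (l : X) : Prop :=
  ∀ c ∈ T, d c l ≤ liminfN r fun γ => d c (x γ)

/-- `x_λ →^◦_◦ l` with holes tested against points of `T`. -/
def BiConvOn {ι X : Type} (r : ι → ι → Prop) (d : X → X → ℝ≥0∞) (T : Set X)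
    (x : ι → X) (l : X) : Prop :=
  UpperConvOn r d T x l ∧ LowerConvOn r d T x l

/-- The supremum distance on functions `Q → X`. -/
noncomputable def supD {Q X : Type} (d : X → X → ℝ≥0∞) (f g : Q → X) : ℝ≥0∞ :=
  ⨆ p, d (f p) (g p)

/-- The upper ball topology `X^•`, generated by the balls `{x | d c x < ε}`. -/
def upperBallTop {X : Type} (d : X → X → ℝ≥0∞) : TopologicalSpace X :=
  TopologicalSpace.generateFrom {s | ∃ c, ∃ ε : ℝ≥0∞, 0 < ε ∧ s = {x | d c x < ε}}

/-- The lower ball topology `X_•`, generated by the balls `{x | d x c < ε}`. -/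
def lowerBallTop {X : Type} (d : X → X → ℝ≥0∞) : TopologicalSpace X :=
  TopologicalSpace.generateFrom {s | ∃ c, ∃ ε : ℝ≥0∞, 0 < ε ∧ s = {x | d x c < ε}}

/-- `X` is `d`-complete: every `d`-Cauchy net has a `→^◦_◦`-limit. -/
def DComplete {X : Type} (d : X → X → ℝ≥0∞) : Prop :=
  ∀ (ι : Type) (r : ι → ι → Prop) (x : ι → X), Nonempty ι → TransRel r → DirRel r →
    DCauchyN r d x → ∃ l, BiConvOn r d Set.univ x l

/-- `y` is `d`-finite: `d(y, x_λ) → d(y, l)` whenever `(x_λ)` is `d`-Cauchy and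
`x_λ →^◦_◦ l`. -/
def DFinite {X : Type} (d : X → X → ℝ≥0∞) (y : X) : Prop :=
  ∀ (ι : Type) (r : ι → ι → Prop) (x : ι → X) (l : X), Nonempty ι → TransRel r → DirRel r →
    DCauchyN r d x → BiConvOn r d Set.univ x l →
      TendstoN r (fun γ => d y (x γ)) (d y l)

/-- The `d`-finite topology `X^{F•}`, generated by upper balls with `d`-finite centres. -/
def dFiniteTop {X : Type} (d : X → X → ℝ≥0∞) : TopologicalSpace X :=
  TopologicalSpace.generateFrom
    {s | ∃ c, DFinite d c ∧ ∃ ε : ℝ≥0∞, 0 < ε ∧ s = {x | d c x < ε}}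

open Filter Topology

/-!
For a `d`-Cauchy net `x` and any point `y`, the net `d(y, x_λ)` is almost decreasing
(`d(y, x_δ) ≤ d(y, x_γ) + d(x_γ, x_δ)`), so its liminf and limsup agree; applied to the
pointwise distances and to `sup-d` this gives both limits. For `lim sup_p ≤ sup_p lim`, fix
`ε` and `p`: some late `g_β(p)` is within `sup L + ε` of `f(p)`, and for `γ` after `β` the
`q` with `d(f q, g_β p) < sup L + ε` and `d(g_β p, g_γ q) < ε` form a neighbourhood of `p`,
because `f` is `X_•`-continuous and `g_γ` is `X^•`-continuous. By compactness finitely many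
such indices suffice, and the Cauchy condition carries the bound to all later indices.
-/

section Nets

variable {ι : Type} {r : ι → ι → Prop}

theorem TransRel.exists_forall_mem_finset (htr : TransRel r) (hdir : DirRel r)
    (γ₀ : ι) (s : Finset ι) : ∃ γ, r γ₀ γ ∧ ∀ β ∈ s, r β γ := by
  classical
  induction s using Finset.induction_on with
  | empty =>
    obtain ⟨γ, hγ, -⟩ := hdir γ₀ γ₀
    exact ⟨γ, hγ, by simp⟩
  | insert a s _ ih =>
    obtain ⟨γ, h₀γ, hsγ⟩ := ih
    obtain ⟨γ', haγ', hγγ'⟩ := hdir a γ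
    refine ⟨γ', htr _ _ _ h₀γ hγγ', fun β hβ => ?_⟩
    rcases Finset.mem_insert.1 hβ with rfl | hβ
    · exact haγ'
    · exact htr _ _ _ (hsγ β hβ) hγγ'

theorem liminfN_le_limsupN (hdir : DirRel r) (a : ι → ℝ≥0∞) :
    liminfN r a ≤ limsupN r a := by
  refine iSup_le fun β => le_iInf fun γ => ?_
  obtain ⟨δ, hβδ, hγδ⟩ := hdir β γ
  exact (iInf₂_le δ hβδ).trans (le_iSup₂ (f := fun δ (_ : r γ δ) => a δ) δ hγδ)

theorem limsupN_le_of_forall_le {a : ι → ℝ≥0∞} {M : ℝ≥0∞} (γ : ι)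
    (h : ∀ δ, r γ δ → a δ ≤ M) : limsupN r a ≤ M :=
  iInf_le_of_le γ (iSup₂_le h)

theorem exists_lt_of_limsupN_lt (hdir : DirRel r) {a : ι → ℝ≥0∞} {M : ℝ≥0∞}
    (h : limsupN r a < M) (γ₀ : ι) : ∃ β, r γ₀ β ∧ a β < M := by
  obtain ⟨γ, hγ⟩ := iInf_lt_iff.1 h
  obtain ⟨β, hγβ, h₀β⟩ := hdir γ γ₀
  exact ⟨β, h₀β, (le_iSup₂ (f := fun δ (_ : r γ δ) => a δ) β hγβ).trans_lt hγ⟩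

theorem tendstoN_limsupN_of_le_add (hdir : DirRel r) (a : ι → ℝ≥0∞)
    (h : ∀ ε : ℝ≥0∞, 0 < ε → ∃ γ₀, ∀ γ δ, r γ₀ γ → r γ δ → a δ ≤ a γ + ε) :
    TendstoN r a (limsupN r a) := by
  refine ⟨le_antisymm (liminfN_le_limsupN hdir a) ?_, rfl⟩
  refine ENNReal.le_of_forall_pos_le_add fun ε hε _ => ?_
  obtain ⟨γ₀, hγ₀⟩ := h ε (by exact_mod_cast hε)
  have hlim : limsupN r a ≤ (⨅ γ, ⨅ _ : r γ₀ γ, a γ) + ε := by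
    simp only [ENNReal.iInf_add]
    exact le_iInf₂ fun γ h₀γ => limsupN_le_of_forall_le γ fun δ hγδ => hγ₀ γ δ h₀γ hγδ
  exact hlim.trans (add_le_add_left (le_iSup (fun γ => ⨅ δ, ⨅ _ : r γ δ, a δ) γ₀) _)

theorem IsDistance.tendstoN_limsupN {Y : Type} {D : Y → Y → ℝ≥0∞} (hD : IsDistance D)
    (hdir : DirRel r) {x : ι → Y} (hx : DCauchyN r D x) (y : Y) :
    TendstoN r (fun i => D y (x i)) (limsupN r fun i => D y (x i)) := by
  refine tendstoN_limsupN_of_le_add hdir _ fun ε hε => ?_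
  obtain ⟨γ₀, hγ₀⟩ := hx ε hε
  exact ⟨γ₀, fun γ δ h₀γ hγδ =>
    (hD y (x γ) (x δ)).trans (add_le_add_right (hγ₀ γ δ h₀γ hγδ).le _)⟩

end Nets

section SupDistance

variable {Q X : Type} {d : X → X → ℝ≥0∞}

theorem le_supD (f g : Q → X) (p : Q) : d (f p) (g p) ≤ supD d f g :=
  le_iSup (fun q => d (f q) (g q)) p

theorem IsDistance.supD (hd : IsDistance d) : IsDistance (supD (Q := Q) d) :=
  fun f g h => iSup_le fun p =>
    (hd _ _ _).trans (add_le_add (le_supD f g p) (le_supD g h p))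

theorem DCauchyN.eval {ι : Type} {r : ι → ι → Prop} {g : ι → Q → X}
    (hC : DCauchyN r (supD d) g) (p : Q) : DCauchyN r d fun i => g i p := fun ε hε =>
  (hC ε hε).imp fun _ h γ δ h₀γ hγδ => (le_supD _ _ p).trans_lt (h γ δ h₀γ hγδ)

end SupDistance

section BallTopologies

variable {Q X : Type} [TopologicalSpace Q] {d : X → X → ℝ≥0∞}

theorem isOpen_setOf_lt_of_lowerBallTop {f : Q → X}
    (hf : @Continuous Q X _ (lowerBallTop d) f) (c : X) {ε : ℝ≥0∞} (hε : 0 < ε) :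
    IsOpen {q | d (f q) c < ε} :=
  @Continuous.isOpen_preimage Q X _ (lowerBallTop d) f hf _
    (isOpen_generateFrom_of_mem ⟨c, ε, hε, rfl⟩)

theorem isOpen_setOf_lt_of_upperBallTop {g : Q → X}
    (hg : @Continuous Q X _ (upperBallTop d) g) (c : X) {ε : ℝ≥0∞} (hε : 0 < ε) :
    IsOpen {q | d c (g q) < ε} :=
  @Continuous.isOpen_preimage Q X _ (upperBallTop d) g hg _
    (isOpen_generateFrom_of_mem ⟨c, ε, hε, rfl⟩)

theorem eventually_lt_add_of_lowerBallTop_of_upperBallTop (hd : IsDistance d) {f g : Q → X}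
    (hf : @Continuous Q X _ (lowerBallTop d) f) (hg : @Continuous Q X _ (upperBallTop d) g)
    {p : Q} {c : X} {M ε : ℝ≥0∞} (hfc : d (f p) c < M) (hcg : d c (g p) < ε) :
    ∀ᶠ q in 𝓝 p, d (f q) (g q) < M + ε := by
  have hf' := (isOpen_setOf_lt_of_lowerBallTop hf c (pos_of_gt hfc)).mem_nhds hfc
  have hg' := (isOpen_setOf_lt_of_upperBallTop hg c (pos_of_gt hcg)).mem_nhds hcg
  filter_upwards [hf', hg'] with q hfq hgq
  exact (hd _ c _).trans_lt (ENNReal.add_lt_add hfq hgq)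

end BallTopologies

theorem TransRel.exists_forall_exists_of_eventually_nhds {ι Q : Type} {r : ι → ι → Prop}
    [TopologicalSpace Q] [CompactSpace Q] (htr : TransRel r) (hdir : DirRel r) (γ₀ : ι)
    {P : ι → Q → Prop} (h : ∀ p, ∃ γ, ∀ᶠ q in 𝓝 p, P γ q) :
    ∃ γ₁, r γ₀ γ₁ ∧ ∀ q, ∃ γ, r γ γ₁ ∧ P γ q := by
  classical
  choose γ hγ using h
  obtain ⟨t, ht⟩ := finite_cover_nhds hγ
  obtain ⟨γ₁, h₀γ₁, htγ₁⟩ := htr.exists_forall_mem_finset hdir γ₀ (t.image γ)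
  refine ⟨γ₁, h₀γ₁, fun q => ?_⟩
  obtain ⟨p, hp, hq⟩ := Set.mem_iUnion₂.1 (ht.symm ▸ Set.mem_univ q)
  exact ⟨γ p, htγ₁ _ (Finset.mem_image_of_mem γ hp), hq⟩

theorem limsupN_supD_le_iSup_limsupN {X Q ι : Type} [TopologicalSpace Q] [CompactSpace Q]
    {d : X → X → ℝ≥0∞} (hd : IsDistance d) {r : ι → ι → Prop} (htr : TransRel r)
    (hdir : DirRel r) {f : Q → X} (hf : @Continuous Q X _ (lowerBallTop d) f)
    {g : ι → Q → X} (hg : ∀ i, @Continuous Q X _ (upperBallTop d) (g i))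
    (hC : DCauchyN r (supD d) g) :
    limsupN r (fun i => supD d f (g i)) ≤ ⨆ p, limsupN r fun i => d (f p) (g i p) := by
  set S := ⨆ p, limsupN r fun i => d (f p) (g i p)
  refine ENNReal.le_of_forall_pos_le_add fun ε hε hS => ?_
  have hε3 : (0 : ℝ≥0∞) < ε / 3 := ENNReal.div_pos (by exact_mod_cast hε.ne') (by simp)
  obtain ⟨γ₀, hγ₀⟩ := hC _ hε3
  have hC₀ : ∀ γ δ q, r γ₀ γ → r γ δ → d (g γ q) (g δ q) < ε / 3 := fun γ δ q h₀γ hγδ =>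
    (le_supD _ _ q).trans_lt (hγ₀ γ δ h₀γ hγδ)
  have hlocal : ∀ p, ∃ γ, ∀ᶠ q in 𝓝 p,
      r γ₀ γ ∧ d (f q) (g γ q) < S + ε / 3 + ε / 3 := by
    intro p
    have hp : (limsupN r fun i => d (f p) (g i p)) < S + ε / 3 :=
      (le_iSup (fun p => limsupN r fun i => d (f p) (g i p)) p).trans_lt
        (ENNReal.lt_add_right hS.ne hε3.ne')
    obtain ⟨β, h₀β, hβ⟩ := exists_lt_of_limsupN_lt hdir hp γ₀
    obtain ⟨γ, hβγ, -⟩ := hdir β β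
    exact ⟨γ, (eventually_lt_add_of_lowerBallTop_of_upperBallTop hd hf (hg γ) hβ
      (hC₀ β γ p h₀β hβγ)).mono fun q hq => ⟨htr _ _ _ h₀β hβγ, hq⟩⟩
  obtain ⟨γ₁, -, hγ₁⟩ := htr.exists_forall_exists_of_eventually_nhds hdir γ₀ hlocal
  refine limsupN_le_of_forall_le γ₁ fun δ hγ₁δ => iSup_le fun q => ?_
  obtain ⟨γ, hγγ₁, h₀γ, hq⟩ := hγ₁ q
  calc d (f q) (g δ q) ≤ d (f q) (g γ q) + d (g γ q) (g δ q) := hd _ _ _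
    _ ≤ S + ε / 3 + ε / 3 + ε / 3 :=
      add_le_add hq.le (hC₀ γ δ q h₀γ (htr _ _ _ hγγ₁ hγ₁δ)).le
    _ = S + ε := by rw [add_assoc, add_assoc, ← add_assoc (ε / 3 : ℝ≥0∞), ENNReal.add_thirds]

theorem stmt2_general {X Q ι : Type} [TopologicalSpace Q] [CompactSpace Q]
    (d : X → X → ℝ≥0∞) (hd : IsDistance d)
    (r : ι → ι → Prop) (htr : TransRel r) (hdir : DirRel r)
    (f : Q → X) (hf : @Continuous Q X _ (lowerBallTop d) f)
    (g : ι → Q → X) (hg : ∀ i, @Continuous Q X _ (upperBallTop d) (g i))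
    (hC : DCauchyN r (supD d) g) :
    ∃ L : Q → ℝ≥0∞,
      (∀ p, TendstoN r (fun i => d (f p) (g i p)) (L p)) ∧
      TendstoN r (fun i => ⨆ p, d (f p) (g i p)) (⨆ p, L p) := by
  refine ⟨fun p => limsupN r fun i => d (f p) (g i p),
    fun p => hd.tendstoN_limsupN hdir (hC.eval p) (f p), ?_⟩
  have hsup : TendstoN r (fun i => supD d f (g i)) (limsupN r fun i => supD d f (g i)) :=
    hd.supD.tendstoN_limsupN hdir hC f
  have hle : (⨆ p, limsupN r fun i => d (f p) (g i p)) ≤ liminfN r fun i => supD d f (g i) :=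
    iSup_le fun p => (hd.tendstoN_limsupN hdir (hC.eval p) (f p)).1.symm.le.trans
      (iSup_mono fun γ => iInf₂_mono fun δ _ => le_supD f (g δ) p)
  rw [← le_antisymm (limsupN_supD_le_iSup_limsupN hd htr hdir hf hg hC) (hle.trans hsup.1.le)]
  exact hsup

/-- generalized Dini theorem: if `Q` is compact, `f : Q → X` is
`X_•`-continuous and `(g_λ)` is a `sup-d`-Cauchy net of `X^•`-continuous functions, then
each pointwise limit `lim_λ d(f(p), g_λ(p))` exists and
`lim_λ sup_p d(f(p), g_λ(p)) = sup_p lim_λ d(f(p), g_λ(p))`. -/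
theorem stmt2 {X Q ι : Type} [TopologicalSpace Q] [CompactSpace Q]
    (d : X → X → ℝ≥0∞) (hd : IsDistance d)
    (r : ι → ι → Prop) (hne : Nonempty ι) (htr : TransRel r) (hdir : DirRel r)
    (f : Q → X) (hf : @Continuous Q X _ (lowerBallTop d) f)
    (g : ι → Q → X) (hg : ∀ i, @Continuous Q X _ (upperBallTop d) (g i))
    (hC : DCauchyN r (supD d) g) :
    ∃ L : Q → ℝ≥0∞,
      (∀ p, TendstoN r (fun i => d (f p) (g i p)) (L p)) ∧
      TendstoN r (fun i => ⨆ p, d (f p) (g i p)) (⨆ p, L p) :=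
  stmt2_general d hd r htr hdir f hf g hg hC
end

section
/- Let X be a preordered Banach space. Then the unit ball X^{**1} of the bidual is d-complete, and for every d-Cauchy net (x_λ) in X^{**1} and every x ∈ X^{**}: x_λ →^◦_◦ x (holes tested against all points of X^{**}) if and only if x_λ(φ) → x(φ) for every φ ∈ Q. -/
open TopologicalSpace ENNReal

/-- The bidual `X**` of a real normed space. -/
abbrev Bidual (X : Type) [NormedAddCommGroup X] [NormedSpace ℝ X] : Type :=
  StrongDual ℝ (StrongDual ℝ X)

/-- The positive cone of a preordered Banach space: a norm-closed set containing `0`,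
closed under nonnegative scaling and addition. -/
def IsGoodCone (X : Type) [NormedAddCommGroup X] [NormedSpace ℝ X] (K : Set X) : Prop :=
  IsClosed K ∧ (0 : X) ∈ K ∧ (∀ r : ℝ, 0 ≤ r → ∀ x ∈ K, r • x ∈ K) ∧
    ∀ x ∈ K, ∀ y ∈ K, x + y ∈ K

/-- `Q = X^{*1}_+`, the positive unit ball of the dual. -/
def posQ (X : Type) [NormedAddCommGroup X] [NormedSpace ℝ X] (K : Set X) :
    Set (StrongDual ℝ X) :=
  {φ | ‖φ‖ ≤ 1 ∧ ∀ v ∈ K, 0 ≤ φ v}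

/-- The canonical hemimetric on `X**`: `d(x,y) = ‖x - y‖_≤ = sup_{φ ∈ Q} φ(x - y)`. -/
noncomputable def ddist {X : Type} [NormedAddCommGroup X] [NormedSpace ℝ X] (K : Set X)
    (x y : Bidual X) : ℝ≥0∞ :=
  ⨆ φ ∈ posQ X K, ENNReal.ofReal ((x - y) φ)

/-- The weak* topology on `Q = X^{*1}_+`. -/
def qTop (X : Type) [NormedAddCommGroup X] [NormedSpace ℝ X] (K : Set X) :
    TopologicalSpace (posQ X K) :=
  TopologicalSpace.induced (fun φ : posQ X K => fun v : X => φ.1 v) inferInstance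

/-- `x ∈ X^S`: the restriction of `x ∈ X**` to `Q` is weak* lower semicontinuous. -/
def lscS {X : Type} [NormedAddCommGroup X] [NormedSpace ℝ X] (K : Set X)
    (x : Bidual X) : Prop :=
  @LowerSemicontinuous (posQ X K) ℝ (qTop X K) _ fun φ => x φ.1

/-- `B^{<∞}`: the bounded functions `Q → X**`. -/
def Bset (X : Type) [NormedAddCommGroup X] [NormedSpace ℝ X] (Q : Type) :
    Set (Q → Bidual X) := {f | ∃ M, ∀ p, ‖f p‖ ≤ M}

/-- The upper ball topology on `X^S`, generated by the balls
`{y | d(c, y) < ε}` for `c ∈ X^S`. -/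
def upTopXS {X : Type} [NormedAddCommGroup X] [NormedSpace ℝ X] (K : Set X) :
    TopologicalSpace {x : Bidual X // lscS K x} :=
  TopologicalSpace.generateFrom
    {s | ∃ c : {x : Bidual X // lscS K x}, ∃ ε : ℝ≥0∞, 0 < ε ∧ s = {y | ddist K c.1 y.1 < ε}}

/-- `f ∈ S`: a bounded function `Q → X**` taking values in `X^S` that is continuous
into `X^S` with its upper ball topology. -/
def MemS {X : Type} [NormedAddCommGroup X] [NormedSpace ℝ X] (K : Set X)
    {Q : Type} [TopologicalSpace Q] (f : Q → Bidual X) : Prop :=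
  f ∈ Bset X Q ∧ ∃ h : ∀ p, lscS K (f p),
    @Continuous Q {x : Bidual X // lscS K x} _ (upTopXS K) fun p => ⟨f p, h p⟩

/-!
Banach–Alaoglu gives a weak* cluster point `l` of a net in the unit ball of `X**`. For
`φ ∈ Q` the real net `x_λ(φ)` is Cauchy from above (`x_γ(φ) - x_δ(φ) ≤ d(x_γ, x_δ)`), and
such a net converges to each of its cluster points, so `x_λ → l` pointwise on `Q`. Pointwise
convergence on `Q` gives `→^◦_◦` because `‖·‖_≤` is a supremum of the continuous maps
`v ↦ φ(v)⁺`. Conversely, for a `d`-Cauchy net any `→^◦`-limit `l` and `→_◦`-limit `l'`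
satisfy `d(l, l') = 0`; applied in both directions to a `→^◦_◦`-limit and the pointwise
limit, this makes them agree on `Q`.
-/

open Filter Topology

section Hemimetric

variable {ι X : Type} {F : Filter ι} {d : X → X → ℝ≥0∞} {x : ι → X}

def IsDCauchy (F : Filter ι) (d : X → X → ℝ≥0∞) (x : ι → X) : Prop :=
  ∀ ε > 0, ∀ᶠ γ in F, ∀ᶠ δ in F, d (x γ) (x δ) < ε

def UpperConv (F : Filter ι) (d : X → X → ℝ≥0∞) (x : ι → X) (l : X) : Prop :=
  ∀ c, d l c ≤ liminf (fun γ => d (x γ) c) F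

def LowerConv (F : Filter ι) (d : X → X → ℝ≥0∞) (x : ι → X) (l : X) : Prop :=
  ∀ c, d c l ≤ liminf (fun γ => d c (x γ)) F

theorem IsDCauchy.eventually_dist_le_of_lowerConv [F.NeBot] (hc : IsDCauchy F d x) {l : X}
    (hl : LowerConv F d x l) {ε : ℝ≥0∞} (hε : 0 < ε) : ∀ᶠ γ in F, d (x γ) l ≤ ε :=
  (hc ε hε).mono fun γ hγ =>
    (hl (x γ)).trans (liminf_le_of_frequently_le' (hγ.frequently.mono fun _ => le_of_lt))

theorem IsDCauchy.dist_eq_zero [F.NeBot] (hc : IsDCauchy F d x) {l l' : X}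
    (hu : UpperConv F d x l) (hl : LowerConv F d x l') : d l l' = 0 := by
  refine nonpos_iff_eq_zero.1 (ENNReal.le_of_forall_pos_le_add fun ε hε _ => ?_)
  rw [zero_add]
  exact (hu l').trans (liminf_le_of_frequently_le'
    (hc.eventually_dist_le_of_lowerConv hl (ENNReal.coe_pos.2 hε)).frequently)

end Hemimetric

section Nets

variable {ι : Type} {r : ι → ι → Prop}

def tails (r : ι → ι → Prop) : Filter ι := ⨅ γ, 𝓟 {δ | r γ δ}

variable [Nonempty ι]

theorem hasBasis_tails (ht : TransRel r) (hd : DirRel r) :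
    (tails r).HasBasis (fun _ => True) fun γ => {δ | r γ δ} :=
  hasBasis_iInf_principal fun a b =>
    let ⟨c, hac, hbc⟩ := hd a b
    ⟨c, fun δ hδ => ht a c δ hac hδ, fun δ hδ => ht b c δ hbc hδ⟩

theorem tails_neBot (ht : TransRel r) (hd : DirRel r) : (tails r).NeBot :=
  (hasBasis_tails ht hd).neBot_iff.2 fun {γ} _ => (hd γ γ).imp fun _ h => h.1

theorem liminfN_eq_liminf (ht : TransRel r) (hd : DirRel r) (a : ι → ℝ≥0∞) :
    liminfN r a = liminf a (tails r) := by
  simp [(hasBasis_tails ht hd).liminf_eq_iSup_iInf, liminfN]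

theorem tendstoRN_iff_tendsto (ht : TransRel r) (hd : DirRel r) {a : ι → ℝ} {L : ℝ} :
    TendstoRN r a L ↔ Tendsto a (tails r) (𝓝 L) := by
  simp [(hasBasis_tails ht hd).tendsto_iff Metric.nhds_basis_ball, TendstoRN, Real.dist_eq]

theorem DCauchyN.isDCauchy (ht : TransRel r) (hd : DirRel r) {X : Type} {d : X → X → ℝ≥0∞}
    {x : ι → X} (hc : DCauchyN r d x) : IsDCauchy (tails r) d x := fun ε hε => by
  obtain ⟨γ₀, h⟩ := hc ε hε
  have hb := hasBasis_tails ht hd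
  exact hb.eventually_iff.2
    ⟨γ₀, trivial, fun γ hγ => hb.eventually_iff.2 ⟨γ, trivial, (h γ · hγ)⟩⟩

theorem biConvOn_univ_iff (ht : TransRel r) (hd : DirRel r) {X : Type} {d : X → X → ℝ≥0∞}
    {x : ι → X} {l : X} :
    BiConvOn r d Set.univ x l ↔ UpperConv (tails r) d x l ∧ LowerConv (tails r) d x l := by
  simp [BiConvOn, UpperConvOn, LowerConvOn, UpperConv, LowerConv, liminfN_eq_liminf ht hd]

end Nets

theorem tendsto_of_mapClusterPt_of_upperCauchy {ι : Type} {F : Filter ι} {a : ι → ℝ}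
    {L : ℝ} (hL : MapClusterPt L F a) (h : ∀ ε > 0, ∀ᶠ γ in F, ∀ᶠ δ in F, a γ - a δ < ε) :
    Tendsto a F (𝓝 L) := by
  refine tendsto_order.2 ⟨fun u hu => ?_, fun u hu => ?_⟩
  · have hnear : ∀ᶠ b in 𝓝 L, L - (L - u) / 2 < b := eventually_gt_nhds (by linarith)
    obtain ⟨γ, hγL, hγ⟩ :=
      ((hL.frequently hnear).and_eventually (h ((L - u) / 2) (by linarith))).exists
    exact hγ.mono fun δ hδ => by linarith
  · have hnear : ∀ᶠ b in 𝓝 L, b < L + (u - L) / 2 := eventually_lt_nhds (by linarith)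
    refine (h ((u - L) / 2) (by linarith)).mono fun γ hγ => ?_
    obtain ⟨δ, hγδ, hδL⟩ := (hγ.and_frequently (hL.frequently hnear)).exists
    linarith

section Bidual

variable {X : Type} [NormedAddCommGroup X] [NormedSpace ℝ X] {K : Set X}

/-- The asymmetric norm `‖v‖_≤`. -/
noncomputable def orderNorm (K : Set X) (v : Bidual X) : ℝ≥0∞ :=
  ⨆ φ ∈ posQ X K, ENNReal.ofReal (v φ)

theorem ddist_eq_orderNorm (x y : Bidual X) : ddist K x y = orderNorm K (x - y) := rfl

theorem ofReal_apply_le_orderNorm {φ : StrongDual ℝ X} (hφ : φ ∈ posQ X K) (v : Bidual X) :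
    ENNReal.ofReal (v φ) ≤ orderNorm K v :=
  le_iSup₂ (f := fun φ (_ : φ ∈ posQ X K) => ENNReal.ofReal (v φ)) φ hφ

theorem apply_sub_apply_lt_of_ddist_lt {x y : Bidual X} {ε : ℝ}
    (h : ddist K x y < ENNReal.ofReal ε) {φ : StrongDual ℝ X} (hφ : φ ∈ posQ X K) :
    x φ - y φ < ε :=
  (ENNReal.ofReal_lt_ofReal_iff'.1 ((ofReal_apply_le_orderNorm hφ (x - y)).trans_lt h)).1

theorem apply_le_apply_of_ddist_eq_zero {x y : Bidual X} (h : ddist K x y = 0)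
    {φ : StrongDual ℝ X} (hφ : φ ∈ posQ X K) : x φ ≤ y φ := by
  have := ofReal_apply_le_orderNorm hφ (x - y)
  rw [← ddist_eq_orderNorm, h, nonpos_iff_eq_zero, ENNReal.ofReal_eq_zero] at this
  simpa [sub_nonpos] using this

variable {ι : Type} {F : Filter ι} [F.NeBot]

theorem orderNorm_le_liminf {v : ι → Bidual X} {w : Bidual X}
    (h : ∀ φ ∈ posQ X K, Tendsto (fun i => v i φ) F (𝓝 (w φ))) :
    orderNorm K w ≤ liminf (fun i => orderNorm K (v i)) F :=
  iSup₂_le fun φ hφ => calc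
    ENNReal.ofReal (w φ) = liminf (fun i => ENNReal.ofReal (v i φ)) F :=
      ((ENNReal.continuous_ofReal.tendsto _).comp (h φ hφ)).liminf_eq.symm
    _ ≤ liminf (fun i => orderNorm K (v i)) F :=
      liminf_le_liminf (Eventually.of_forall fun i => ofReal_apply_le_orderNorm hφ (v i))

theorem upperConv_lowerConv_of_tendsto_apply {x : ι → Bidual X} {l : Bidual X}
    (h : ∀ φ ∈ posQ X K, Tendsto (fun i => x i φ) F (𝓝 (l φ))) :
    UpperConv F (ddist K) x l ∧ LowerConv F (ddist K) x l :=
  ⟨fun c => orderNorm_le_liminf fun φ hφ => by simpa using (h φ hφ).sub_const (c φ),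
    fun c => orderNorm_le_liminf fun φ hφ => by simpa using (h φ hφ).const_sub (c φ)⟩

theorem exists_norm_le_one_tendsto_apply {x : ι → Bidual X} (hb : ∀ i, ‖x i‖ ≤ 1)
    (hc : IsDCauchy F (ddist K) x) :
    ∃ l : Bidual X, ‖l‖ ≤ 1 ∧ ∀ φ ∈ posQ X K, Tendsto (fun i => x i φ) F (𝓝 (l φ)) := by
  obtain ⟨w, hw, hcl⟩ := WeakDual.isCompact_closedBall (𝕜 := ℝ) (0 : Bidual X) 1
    (f := map (fun i => StrongDual.toWeakDual (x i)) F)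
    (tendsto_principal.2 (Eventually.of_forall fun i =>
      show StrongDual.toWeakDual (x i) ∈ _ by simpa using hb i))
  refine ⟨WeakDual.toStrongDual w, by simpa using hw, fun φ hφ =>
    tendsto_of_mapClusterPt_of_upperCauchy
      (MapClusterPt.continuousAt_comp (WeakDual.eval_continuous φ).continuousAt hcl)
      fun ε hε => ?_⟩
  exact (hc _ (ENNReal.ofReal_pos.2 hε)).mono fun γ hγ =>
    hγ.mono fun δ hδ => apply_sub_apply_lt_of_ddist_lt hδ hφ

theorem tendsto_apply_of_upperConv_of_lowerConv {x : ι → Bidual X} {l : Bidual X}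
    (hb : ∀ i, ‖x i‖ ≤ 1) (hc : IsDCauchy F (ddist K) x) (hu : UpperConv F (ddist K) x l)
    (hl : LowerConv F (ddist K) x l) :
    ∀ φ ∈ posQ X K, Tendsto (fun i => x i φ) F (𝓝 (l φ)) := by
  obtain ⟨l', -, hl'⟩ := exists_norm_le_one_tendsto_apply hb hc
  obtain ⟨hu', hl''⟩ := upperConv_lowerConv_of_tendsto_apply hl'
  intro φ hφ
  have hll' : l φ = l' φ := le_antisymm
    (apply_le_apply_of_ddist_eq_zero (hc.dist_eq_zero hu hl'') hφ)
    (apply_le_apply_of_ddist_eq_zero (hc.dist_eq_zero hu' hl) hφ)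
  simpa only [hll'] using hl' φ hφ

end Bidual

theorem stmt5_general (X : Type) [NormedAddCommGroup X] [NormedSpace ℝ X]
    (K : Set X) :
    (∀ (ι : Type) (r : ι → ι → Prop) (x : ι → Bidual X),
      Nonempty ι → TransRel r → DirRel r → (∀ i, ‖x i‖ ≤ 1) →
      DCauchyN r (ddist K) x →
        ∃ l : Bidual X, ‖l‖ ≤ 1 ∧ BiConvOn r (ddist K) Set.univ x l) ∧
    (∀ (ι : Type) (r : ι → ι → Prop) (x : ι → Bidual X) (l : Bidual X),
      Nonempty ι → TransRel r → DirRel r → (∀ i, ‖x i‖ ≤ 1) →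
      DCauchyN r (ddist K) x →
        (BiConvOn r (ddist K) Set.univ x l ↔
          ∀ φ ∈ posQ X K, TendstoRN r (fun i => x i φ) (l φ))) := by
  refine ⟨fun ι r x _ ht hd hb hc => ?_, fun ι r x l _ ht hd hb hc => ?_⟩
  · have := tails_neBot ht hd
    obtain ⟨l, hl1, hl⟩ := exists_norm_le_one_tendsto_apply hb (hc.isDCauchy ht hd)
    exact ⟨l, hl1, (biConvOn_univ_iff ht hd).2 (upperConv_lowerConv_of_tendsto_apply hl)⟩
  · have := tails_neBot ht hd
    simp only [biConvOn_univ_iff ht hd, tendstoRN_iff_tendsto ht hd]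
    exact ⟨fun h => tendsto_apply_of_upperConv_of_lowerConv hb (hc.isDCauchy ht hd) h.1 h.2,
      upperConv_lowerConv_of_tendsto_apply⟩

/-- the unit ball `X^{**1}` of the bidual is `d`-complete and, for a
`d`-Cauchy net `(x_λ)` in `X^{**1}` and `x ∈ X**`, `x_λ →^◦_◦ x` iff `x_λ(φ) → x(φ)`
for all `φ ∈ Q`. -/
theorem stmt5 (X : Type) [NormedAddCommGroup X] [NormedSpace ℝ X] [CompleteSpace X]
    (K : Set X) (hK : IsGoodCone X K) :
    (∀ (ι : Type) (r : ι → ι → Prop) (x : ι → Bidual X),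
      Nonempty ι → TransRel r → DirRel r → (∀ i, ‖x i‖ ≤ 1) →
      DCauchyN r (ddist K) x →
        ∃ l : Bidual X, ‖l‖ ≤ 1 ∧ BiConvOn r (ddist K) Set.univ x l) ∧
    (∀ (ι : Type) (r : ι → ι → Prop) (x : ι → Bidual X) (l : Bidual X),
      Nonempty ι → TransRel r → DirRel r → (∀ i, ‖x i‖ ≤ 1) →
      DCauchyN r (ddist K) x →
        (BiConvOn r (ddist K) Set.univ x l ↔
          ∀ φ ∈ posQ X K, TendstoRN r (fun i => x i φ) (l φ))) :=
  stmt5_general X K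
end

section
/- Let X be a preordered Banach space. Then X^C = X^D: an element x ∈ X** is the →^◦_◦-limit of a d-Cauchy net with terms in X if and only if it is the →^◦_◦-limit of a d-dominating net with terms in X. -/
open TopologicalSpace ENNReal

/-!
A dominating net becomes Cauchy once it is re-indexed by pairs `(γ, q)`, passing only to points
beyond which the net stays `q`-close to its `γ`-th term.

Conversely, let `y` be a Cauchy net in `X` with limit `x`, and call `w ∈ X` eventually below the
net if `d(w, y_δ) → 0`; such `w` satisfy `d(w, x) = 0`. By Hahn–Banach, `d(u, v) < e` makes `u - v`
`e`-close in norm to `-K`. Along a fast subsequence `y_{f n}` this gives corrections `a n` of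
geometrically small norm with `y_{f (n+1)} - y_{f n} + a n ∈ K`; their sum converges since `X` is
complete, and subtracting its tails turns the subsequence into an increasing sequence whose first
term is eventually below the net and `d`-close to a tail of it. The formal balls `(w, q)` over the
points eventually below the net then form a dominating net, which converges to `x` from below
because `d(w, x) = 0` and from above because every tail of `y` is `d`-close to some such `w`.
-/

open scoped NNReal Pointwise

section Hemimetric

variable {ι J A Y : Type} {r : ι → ι → Prop} {R : J → J → Prop} {d : Y → Y → ℝ≥0∞}

theorem liminfN_le_liminfN_add {g : ι → ℝ≥0∞} {h : J → ℝ≥0∞} {η : ℝ≥0∞}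
    (H : ∀ μ, ∃ Γ, ∀ Δ, R Γ Δ → ∃ δ, r μ δ ∧ g δ ≤ h Δ + η) :
    liminfN r g ≤ liminfN R h + η := by
  refine iSup_le fun μ => ?_
  obtain ⟨Γ, hΓ⟩ := H μ
  calc ⨅ δ, ⨅ _ : r μ δ, g δ ≤ ⨅ Δ, ⨅ _ : R Γ Δ, h Δ + η :=
        le_iInf₂ fun Δ hΔ => by
          obtain ⟨δ, hμδ, hle⟩ := hΓ Δ hΔ
          exact (iInf₂_le δ hμδ).trans hle
    _ = (⨅ Δ, ⨅ _ : R Γ Δ, h Δ) + η := by simp only [ENNReal.iInf_add]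
    _ ≤ liminfN R h + η := by
        gcongr
        exact le_iSup (fun Γ => ⨅ Δ, ⨅ _ : R Γ Δ, h Δ) Γ

theorem BiConvOn.comp {T : Set Y} {x : ι → Y} {l : Y} (hx : BiConvOn r d T x l) (π : J → ι)
    (hπ : ∀ μ, ∃ Γ, ∀ Δ, R Γ Δ → r μ (π Δ)) : BiConvOn R d T (x ∘ π) l := by
  have hlim (g : ι → ℝ≥0∞) : liminfN r g ≤ liminfN R (g ∘ π) := by
    simpa using liminfN_le_liminfN_add (η := 0) (h := g ∘ π) fun μ =>
      (hπ μ).imp fun Γ hΓ Δ hΔ => ⟨π Δ, hΓ Δ hΔ, by simp⟩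
  exact ⟨fun c hc => (hx.1 c hc).trans (hlim _), fun c hc => (hx.2 c hc).trans (hlim _)⟩

theorem DDomN.exists_dCauchyN {x : ι → Y} [Nonempty ι] (htr : TransRel r) (hdir : DirRel r)
    (hx : DDomN r d x) :
    ∃ (J : Type) (R : J → J → Prop) (π : J → ι), Nonempty J ∧ TransRel R ∧ DirRel R ∧
      DCauchyN R d (x ∘ π) ∧ ∀ μ, ∃ Γ, ∀ Δ, R Γ Δ → r μ (π Δ) := by
  let R : ι × {q : ℝ≥0∞ // 0 < q} → ι × {q : ℝ≥0∞ // 0 < q} → Prop := fun Γ Δ =>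
    Δ.2.1 ≤ Γ.2.1 ∧ r Γ.1 Δ.1 ∧ (∀ l, r Δ.1 l → d (x Γ.1) (x l) < Γ.2) ∧ d (x Γ.1) (x Δ.1) < Γ.2
  refine ⟨_, R, Prod.fst, ⟨(Classical.arbitrary ι, ⟨1, one_pos⟩)⟩, ?_, ?_, ?_, ?_⟩
  · rintro Γ Δ Θ ⟨hq, hr, hfar, -⟩ ⟨hq', hr', -, -⟩
    exact ⟨hq'.trans hq, htr _ _ _ hr hr', fun l hl => hfar l (htr _ _ _ hr' hl), hfar _ hr'⟩
  · rintro Γ Δ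
    let m := min Γ.2.1 Δ.2.1
    have hm : 0 < m := lt_min Γ.2.2 Δ.2.2
    obtain ⟨γ, hγ, hγfar⟩ := hx Γ.1 m hm
    obtain ⟨δ, hδ, hδfar⟩ := hx Δ.1 m hm
    obtain ⟨μ, hγμ, hδμ⟩ := hdir γ δ
    refine ⟨(μ, ⟨m, hm⟩), ⟨min_le_left _ _, htr _ _ _ hγ hγμ, fun l hl => ?_, ?_⟩,
      ⟨min_le_right _ _, htr _ _ _ hδ hδμ, fun l hl => ?_, ?_⟩⟩
    · exact (hγfar l (htr _ _ _ hγμ hl)).trans_le (min_le_left _ _)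
    · exact (hγfar μ hγμ).trans_le (min_le_left _ _)
    · exact (hδfar l (htr _ _ _ hδμ hl)).trans_le (min_le_right _ _)
    · exact (hδfar μ hδμ).trans_le (min_le_right _ _)
  · intro ε hε
    exact ⟨(Classical.arbitrary ι, ⟨ε, hε⟩), fun Γ Δ hΓ hΔ => hΔ.2.2.2.trans_le hΓ.1⟩
  · exact fun μ => ⟨(μ, ⟨1, one_pos⟩), fun Δ hΔ => hΔ.2.1⟩

def EventuallyAbove (r : ι → ι → Prop) (d : Y → Y → ℝ≥0∞) (x : ι → Y) (w : Y) : Prop :=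
  ∀ ε > 0, ∃ γ, ∀ δ, r γ δ → d w (x δ) < ε

theorem EventuallyAbove.dist_eq_zero {x : ι → Y} {w l : Y} (hw : EventuallyAbove r d x w)
    (hd : IsDistance d) (hdir : DirRel r) (hx : DCauchyN r d x)
    (hl : LowerConvOn r d Set.univ x l) : d w l = 0 := by
  have hxl : ∀ ε > 0, ∃ γ₀, ∀ γ, r γ₀ γ → d (x γ) l ≤ ε := fun ε hε => by
    obtain ⟨γ₀, hγ₀⟩ := hx ε hε
    refine ⟨γ₀, fun γ hγ => (hl _ trivial).trans (iSup_le fun μ => ?_)⟩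
    obtain ⟨δ, hμδ, hγδ⟩ := hdir μ γ
    exact (iInf₂_le δ hμδ).trans (hγ₀ γ δ hγ hγδ).le
  refine le_antisymm (ENNReal.le_of_forall_pos_le_add fun η hη _ => ?_) zero_le
  have hη2 : (0 : ℝ≥0∞) < η / 2 := ENNReal.half_pos (by exact_mod_cast hη.ne')
  obtain ⟨γ, hγ⟩ := hw _ hη2
  obtain ⟨γ', hγ'⟩ := hxl _ hη2
  obtain ⟨δ, hγδ, hγ'δ⟩ := hdir γ γ'
  calc d w l ≤ d w (x δ) + d (x δ) l := hd _ _ _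
    _ ≤ η / 2 + η / 2 := add_le_add (hγ δ hγδ).le (hγ' δ hγ'δ)
    _ = 0 + η := by rw [ENNReal.add_halves, zero_add]

theorem DCauchyN.exists_seq {x : ι → Y} (hx : DCauchyN r d x) (hdir : DirRel r) (μ : ι)
    {ε : ℕ → ℝ≥0∞} (hε : ∀ n, 0 < ε n) :
    ∃ f : ℕ → ι, r μ (f 0) ∧ (∀ n, r (f n) (f (n + 1))) ∧
      ∀ n δ, r (f n) δ → d (x (f n)) (x δ) < ε n := by
  choose c hc using fun n => hx (ε n) (hε n)
  choose u hu₁ hu₂ using hdir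
  let f : ℕ → ι := fun n => Nat.rec (u μ (c 0)) (fun m γ => u γ (c (m + 1))) n
  have hcf : ∀ n, r (c n) (f n)
    | 0 => hu₂ _ _
    | n + 1 => hu₂ _ _
  exact ⟨f, hu₁ _ _, fun n => hu₁ _ _, fun n δ hδ => hc n _ _ (hcf n) hδ⟩

/-- The order of formal balls `(a, q)`: the ball of radius `q'` about `b` lies inside that of
radius `q` about `a`. -/
def BallRel (d : Y → Y → ℝ≥0∞) (z : A → Y) (Γ Δ : A × {q : ℝ≥0 // 0 < q}) : Prop :=
  d (z Γ.1) (z Δ.1) + Δ.2.1 ≤ Γ.2.1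

theorem transRel_ballRel (hd : IsDistance d) (z : A → Y) : TransRel (BallRel d z) :=
  fun Γ Δ Θ hΓΔ hΔΘ => calc
    d (z Γ.1) (z Θ.1) + Θ.2.1 ≤ d (z Γ.1) (z Δ.1) + (d (z Δ.1) (z Θ.1) + Θ.2.1) := by
      rw [← add_assoc]; gcongr; exact hd _ _ _
    _ ≤ Γ.2.1 := (add_le_add le_rfl hΔΘ).trans hΓΔ

theorem dDomN_ballRel (hd0 : ∀ y, d y y = 0) (z : A → Y) :
    DDomN (BallRel d z) d fun Γ => z Γ.1 := by
  rintro ⟨a, q, hq⟩ ε hε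
  obtain ⟨s, hs, hsε⟩ := ENNReal.lt_iff_exists_nnreal_btwn.1 hε
  refine ⟨(a, ⟨min q s, lt_min hq (by exact_mod_cast hs)⟩), ?_, fun Δ hΔ => ?_⟩
  · simp only [BallRel, hd0, zero_add, ENNReal.coe_le_coe]
    exact min_le_left _ _
  · calc d (z a) (z Δ.1) ≤ d (z a) (z Δ.1) + Δ.2.1 := le_self_add
      _ ≤ (min q s : ℝ≥0) := hΔ
      _ ≤ s := by exact_mod_cast min_le_right _ _
      _ < ε := hsε

theorem dirRel_ballRel {z : A → Y}
    (hz : ∀ a b : A, ∀ ε > 0, ∃ c, d (z a) (z c) < ε ∧ d (z b) (z c) < ε) :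
    DirRel (BallRel d z) := by
  rintro ⟨a, q, hq⟩ ⟨b, q', hq'⟩
  set m := min q q'
  have hm : 0 < m / 2 := half_pos (lt_min hq hq')
  obtain ⟨c, hac, hbc⟩ := hz a b (m / 2 : ℝ≥0) (ENNReal.coe_pos.2 hm)
  have key : ∀ {t : ℝ≥0∞}, t < (m / 2 : ℝ≥0) → t + (m / 2 : ℝ≥0) ≤ m := fun ht => by
    calc _ ≤ ((m / 2 : ℝ≥0) : ℝ≥0∞) + (m / 2 : ℝ≥0) := by gcongr
      _ = m := by rw [← ENNReal.coe_add, add_halves]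
  refine ⟨(c, ⟨m / 2, hm⟩), (key hac).trans ?_, (key hbc).trans ?_⟩
  · exact_mod_cast min_le_left _ _
  · exact_mod_cast min_le_right _ _

theorem exists_dDomN_of_eventuallyAbove [Nonempty ι] {x : ι → Y} {l : Y} (hd : IsDistance d)
    (hd0 : ∀ y, d y y = 0) (htr : TransRel r) (hdir : DirRel r) (hx : DCauchyN r d x)
    (hxl : BiConvOn r d Set.univ x l) {z : A → Y} (hz : ∀ a, EventuallyAbove r d x (z a))
    (happrox : ∀ μ, ∀ ε > 0, ∃ a δ, r μ δ ∧ d (x δ) (z a) < ε) :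
    ∃ (J : Type) (R : J → J → Prop) (w : J → A), Nonempty J ∧ TransRel R ∧ DirRel R ∧
      DDomN R d (fun Γ => z (w Γ)) ∧ BiConvOn R d Set.univ (fun Γ => z (w Γ)) l := by
  have hzl (a : A) : d (z a) l = 0 := (hz a).dist_eq_zero hd hdir hx hxl.2
  have hdirA (a b : A) (ε : ℝ≥0∞) (hε : 0 < ε) :
      ∃ c, d (z a) (z c) < ε ∧ d (z b) (z c) < ε := by
    have hε2 : 0 < ε / 2 := ENNReal.half_pos hε.ne'
    obtain ⟨γa, hγa⟩ := hz a _ hε2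
    obtain ⟨γb, hγb⟩ := hz b _ hε2
    obtain ⟨γ, hγaγ, hγbγ⟩ := hdir γa γb
    obtain ⟨c, δ, hγδ, hδc⟩ := happrox γ _ hε2
    have hclose (a' : A) (γ' : ι) (h : ∀ δ, r γ' δ → d (z a') (x δ) < ε / 2) (hγ' : r γ' γ) :
        d (z a') (z c) < ε := calc
      d (z a') (z c) ≤ d (z a') (x δ) + d (x δ) (z c) := hd _ _ _
      _ < ε / 2 + ε / 2 := ENNReal.add_lt_add (h δ (htr _ _ _ hγ' hγδ)) hδc
      _ = ε := ENNReal.add_halves ε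
    exact ⟨c, hclose a γa hγa hγaγ, hclose b γb hγb hγbγ⟩
  obtain ⟨a₀, -⟩ := happrox (Classical.arbitrary ι) 1 one_pos
  refine ⟨_, BallRel d z, Prod.fst, ⟨(a₀, ⟨1, one_pos⟩)⟩, transRel_ballRel hd z,
    dirRel_ballRel hdirA, dDomN_ballRel hd0 z, fun c _ => ?_, fun c _ => ?_⟩
  · refine (hxl.1 c trivial).trans (ENNReal.le_of_forall_pos_le_add fun η hη _ => ?_)
    refine liminfN_le_liminfN_add fun μ => ?_
    obtain ⟨a, δ, hμδ, hδa⟩ := happrox μ (η / 2 : ℝ≥0) (by exact_mod_cast half_pos hη)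
    refine ⟨(a, ⟨η / 2, half_pos hη⟩), fun Δ hΔ => ⟨δ, hμδ, ?_⟩⟩
    have haΔ : d (z a) (z Δ.1) ≤ (η / 2 : ℝ≥0) := le_self_add.trans hΔ
    calc d (x δ) c ≤ d (x δ) (z a) + (d (z a) (z Δ.1) + d (z Δ.1) c) :=
          (hd _ _ _).trans (add_le_add le_rfl (hd _ _ _))
      _ ≤ (η / 2 : ℝ≥0) + ((η / 2 : ℝ≥0) + d (z Δ.1) c) := by gcongr
      _ = d (z Δ.1) c + η := by
          rw [← add_assoc, ← ENNReal.coe_add, add_halves, add_comm]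
  · refine le_iSup_of_le (a₀, ⟨1, one_pos⟩) (le_iInf₂ fun Δ _ => ?_)
    simpa [hzl] using hd c (z Δ.1) l

end Hemimetric

section Banach

variable {X : Type} [NormedAddCommGroup X] [NormedSpace ℝ X] {K : Set X}

local notation "jj" => NormedSpace.inclusionInDoubleDual ℝ X

theorem isDistance_ddist (K : Set X) : IsDistance (ddist K) := by
  intro a b c
  refine iSup₂_le fun φ hφ => ?_
  calc ENNReal.ofReal ((a - c) φ) = ENNReal.ofReal ((a - b) φ + (b - c) φ) := by
        rw [← sub_add_sub_cancel a b c]; rfl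
    _ ≤ ENNReal.ofReal ((a - b) φ) + ENNReal.ofReal ((b - c) φ) := ENNReal.ofReal_add_le
    _ ≤ ddist K a b + ddist K b c := by
        gcongr <;> exact le_iSup₂ (f := fun ψ (_ : ψ ∈ posQ X K) => ENNReal.ofReal (_ : ℝ)) φ hφ

theorem ddist_self (K : Set X) (a : Bidual X) : ddist K a a = 0 := by
  simp [ddist]

theorem inclusionInDoubleDual_sub_apply (u v : X) (φ : StrongDual ℝ X) :
    (jj u - jj v) φ = φ (u - v) := by
  simp

theorem ddist_inclusion_le_norm (K : Set X) (u v : X) :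
    ddist K (jj u) (jj v) ≤ ENNReal.ofReal ‖u - v‖ := by
  refine iSup₂_le fun φ hφ => ENNReal.ofReal_le_ofReal ?_
  rw [inclusionInDoubleDual_sub_apply]
  calc φ (u - v) ≤ ‖φ (u - v)‖ := Real.le_norm_self _
    _ ≤ ‖φ‖ * ‖u - v‖ := φ.le_opNorm _
    _ ≤ ‖u - v‖ := mul_le_of_le_one_left (norm_nonneg _) hφ.1

theorem ddist_inclusion_eq_zero {u v : X} (h : v - u ∈ K) : ddist K (jj u) (jj v) = 0 := by
  refine le_antisymm (iSup₂_le fun φ hφ => ?_) zero_le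
  rw [inclusionInDoubleDual_sub_apply, ← neg_sub, map_neg]
  exact ENNReal.ofReal_eq_zero.2 (neg_nonpos.2 (hφ.2 _ h)) |>.le

theorem IsGoodCone.convex (hK : IsGoodCone X K) : Convex ℝ K :=
  fun _ hu _ hv a b ha hb _ => hK.2.2.2 _ (hK.2.2.1 a ha _ hu) _ (hK.2.2.1 b hb _ hv)

theorem IsGoodCone.sub_mem_of_le (hK : IsGoodCone X K) {b : ℕ → X}
    (hb : ∀ n, b (n + 1) - b n ∈ K) {n m : ℕ} (hnm : n ≤ m) : b m - b n ∈ K := by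
  induction m, hnm using Nat.le_induction with
  | base => simpa using hK.2.1
  | succ m _ ih => simpa using hK.2.2.2 _ (hb m) _ ih

theorem exists_mem_posQ_le_apply (hK : IsGoodCone X K) {w : X} {e : ℝ} (he : 0 < e)
    (hw : ∀ k ∈ K, e ≤ ‖w + k‖) : ∃ φ ∈ posQ X K, e ≤ φ w := by
  have hws : w ∉ -K + Metric.ball (0 : X) e := by
    rintro ⟨k, hk, b, hb, rfl⟩
    exact (hw (-k) hk).not_gt (by simpa using hb)
  obtain ⟨f, hf⟩ := geometric_hahn_banach_open_point
    (hK.convex.neg.add (convex_ball 0 e)) Metric.isOpen_ball.add_left hws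
  have hball (b : X) (hb : ‖b‖ < e) : f b < f w :=
    hf b ⟨0, by simpa using hK.2.1, b, by simpa using hb, zero_add b⟩
  have hfw : 0 < f w := by simpa using hball 0 (by simpa using he)
  have hfK (k : X) (hk : k ∈ K) : 0 ≤ f k := by
    by_contra! hneg
    have := hf (-((f w / -f k) • k))
      ⟨_, by simpa using hK.2.2.1 _ (div_nonneg hfw.le (neg_nonneg.2 hneg.le)) _ hk, 0,
        Metric.mem_ball_self he, add_zero _⟩
    rw [map_neg, map_smul, smul_eq_mul, ← mul_neg, div_mul_cancel₀ _ (neg_ne_zero.2 hneg.ne)]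
      at this
    exact lt_irrefl _ this
  have hnorm : e * ‖f‖ ≤ f w := by
    by_contra! h
    obtain ⟨z, hz, hfz⟩ := f.exists_lt_apply_of_lt_opNorm ((div_lt_iff₀' he).2 h)
    have hez : ‖e • z‖ < e := by
      rw [norm_smul, Real.norm_of_nonneg he.le]; exact mul_lt_of_lt_one_right he hz
    have h₁ := hball (e • z) hez
    have h₂ := hball (-(e • z)) (by rwa [norm_neg])
    simp only [map_neg, map_smul, smul_eq_mul] at h₁ h₂
    rw [Real.norm_eq_abs, lt_abs] at hfz
    rcases hfz with hfz | hfz <;> rw [div_lt_iff₀' he] at hfz <;> linarith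
  have hf0 : 0 < ‖f‖ := norm_pos_iff.2 fun h => by simp [h] at hfw
  refine ⟨‖f‖⁻¹ • f, ⟨?_, fun k hk => ?_⟩, ?_⟩
  · rw [norm_smul, norm_inv, norm_norm, inv_mul_cancel₀ hf0.ne']
  · exact mul_nonneg (inv_nonneg.2 hf0.le) (hfK k hk)
  · rw [smul_apply, smul_eq_mul, inv_mul_eq_div, le_div_iff₀ hf0]
    exact hnorm

theorem exists_norm_lt_of_ddist_lt (hK : IsGoodCone X K) {u v : X} {e : ℝ}
    (h : ddist K (jj u) (jj v) < ENNReal.ofReal e) : ∃ a, ‖a‖ < e ∧ v - u + a ∈ K := by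
  have he : 0 < e := ENNReal.ofReal_pos.1 (zero_le.trans_lt h)
  by_contra! hfar
  obtain ⟨φ, hφ, hφe⟩ := exists_mem_posQ_le_apply hK he (w := u - v) fun k hk =>
    not_lt.1 fun hlt => hfar _ hlt (by rwa [← add_assoc, sub_add_sub_cancel, sub_self, zero_add])
  refine h.not_ge ((ENNReal.ofReal_le_ofReal hφe).trans ?_)
  rw [← inclusionInDoubleDual_sub_apply]
  exact le_iSup₂ (f := fun ψ (_ : ψ ∈ posQ X K) => ENNReal.ofReal ((jj u - jj v) ψ)) φ hφ

variable [CompleteSpace X]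

theorem exists_increasing_near (hK : IsGoodCone X K) {u : ℕ → X} {e : ℝ}
    (hu : ∀ n, ddist K (jj (u n)) (jj (u (n + 1))) < ENNReal.ofReal (e * (1 / 2) ^ n)) :
    ∃ b : ℕ → X, (∀ n, b (n + 1) - b n ∈ K) ∧ ∀ n, ‖u n - b n‖ ≤ 2 * e * (1 / 2) ^ n := by
  choose a ha hK' using fun n => exists_norm_lt_of_ddist_lt hK (hu n)
  have hsum : HasSum a (∑' n, a n) :=
    (Summable.of_norm_bounded (summable_geometric_two.mul_left e) fun n => (ha n).le).hasSum
  refine ⟨fun n => u n + ∑ i ∈ Finset.range n, a i - ∑' n, a n, fun n => ?_, fun n => ?_⟩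
  · convert hK' n using 1
    simp only [Finset.sum_range_succ]
    abel
  · have := norm_sub_le_of_geometric_bound_of_hasSum (by norm_num) (fun n => (ha n).le) hsum n
    rw [show u n - (u n + ∑ i ∈ Finset.range n, a i - ∑' n, a n)
      = -(∑ i ∈ Finset.range n, a i - ∑' n, a n) by abel, norm_neg]
    convert this using 1
    ring

theorem DCauchyN.exists_eventuallyAbove_inclusion (hK : IsGoodCone X K) {ι : Type}
    {r : ι → ι → Prop} {y : ι → X} (hy : DCauchyN r (ddist K) fun i => jj (y i))
    (hdir : DirRel r) (μ : ι) {ε : ℝ≥0∞} (hε : 0 < ε) :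
    ∃ w : X, EventuallyAbove r (ddist K) (fun i => jj (y i)) (jj w) ∧
      ∃ δ, r μ δ ∧ ddist K (jj (y δ)) (jj w) < ε := by
  obtain ⟨t, -, ht0, htε⟩ := ENNReal.lt_iff_exists_real_btwn.1 hε
  set e := t / 2
  have he : 0 < e := half_pos (ENNReal.ofReal_pos.1 ht0)
  obtain ⟨f, hμf, hff, hf⟩ := hy.exists_seq hdir μ (ε := fun n => ENNReal.ofReal (e * (1 / 2) ^ n))
    fun n => ENNReal.ofReal_pos.2 (by positivity)
  obtain ⟨b, hbK, hb⟩ := exists_increasing_near hK (u := fun n => y (f n)) fun n => hf n _ (hff n)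
  refine ⟨b 0, fun ε' hε' => ?_, f 0, hμf, ?_⟩
  · have hlim : Filter.Tendsto (fun n : ℕ => ENNReal.ofReal (3 * e * (1 / 2) ^ n))
        Filter.atTop (nhds 0) := by
      simpa using ENNReal.tendsto_ofReal ((_root_.tendsto_pow_atTop_nhds_zero_of_lt_one
        (r := (1 / 2 : ℝ)) (by norm_num) (by norm_num)).const_mul (3 * e))
    obtain ⟨n, hn⟩ := (hlim.eventually (gt_mem_nhds hε')).exists
    refine ⟨f n, fun δ hδ => lt_of_le_of_lt ?_ hn⟩
    calc ddist K (jj (b 0)) (jj (y δ))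
        ≤ ddist K (jj (b 0)) (jj (b n)) + (ddist K (jj (b n)) (jj (y (f n))) +
          ddist K (jj (y (f n))) (jj (y δ))) :=
          (isDistance_ddist K _ _ _).trans (add_le_add le_rfl (isDistance_ddist K _ _ _))
      _ ≤ 0 + (ENNReal.ofReal (2 * e * (1 / 2) ^ n) + ENNReal.ofReal (e * (1 / 2) ^ n)) := by
          rw [ddist_inclusion_eq_zero (hK.sub_mem_of_le hbK n.zero_le)]
          gcongr
          · exact (ddist_inclusion_le_norm K _ _).trans
              (ENNReal.ofReal_le_ofReal (by rw [norm_sub_rev]; exact hb n))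
          · exact (hf n δ hδ).le
      _ = ENNReal.ofReal (3 * e * (1 / 2) ^ n) := by
          rw [zero_add, ← ENNReal.ofReal_add (by positivity) (by positivity)]
          ring_nf
  · calc ddist K (jj (y (f 0))) (jj (b 0)) ≤ ENNReal.ofReal (2 * e) := by
          simpa using (ddist_inclusion_le_norm K _ _).trans (ENNReal.ofReal_le_ofReal (hb 0))
      _ < ε := by rwa [show 2 * e = t by ring]

end Banach

/-- `X^C = X^D`: `x ∈ X**` is the `→^◦_◦`-limit of a `d`-Cauchy net with
terms in `X` iff it is the `→^◦_◦`-limit of a `d`-dominating net with terms in `X`. -/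
theorem stmt9 (X : Type) [NormedAddCommGroup X] [NormedSpace ℝ X] [CompleteSpace X]
    (K : Set X) (hK : IsGoodCone X K) (x : Bidual X) :
    (∃ (ι : Type) (r : ι → ι → Prop) (y : ι → X),
      Nonempty ι ∧ TransRel r ∧ DirRel r ∧
      DCauchyN r (ddist K) (fun i => NormedSpace.inclusionInDoubleDual ℝ X (y i)) ∧
      BiConvOn r (ddist K) Set.univ
        (fun i => NormedSpace.inclusionInDoubleDual ℝ X (y i)) x) ↔
    (∃ (ι : Type) (r : ι → ι → Prop) (y : ι → X),
      Nonempty ι ∧ TransRel r ∧ DirRel r ∧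
      DDomN r (ddist K) (fun i => NormedSpace.inclusionInDoubleDual ℝ X (y i)) ∧
      BiConvOn r (ddist K) Set.univ
        (fun i => NormedSpace.inclusionInDoubleDual ℝ X (y i)) x) := by
  constructor
  · rintro ⟨ι, r, y, hι, htr, hdir, hy, hyx⟩
    obtain ⟨J, R, w, hJ, htrR, hdirR, hdom, hwx⟩ := exists_dDomN_of_eventuallyAbove
      (A := {w : X // EventuallyAbove r (ddist K)
        (fun i => NormedSpace.inclusionInDoubleDual ℝ X (y i))
        (NormedSpace.inclusionInDoubleDual ℝ X w)})
      (z := fun a => NormedSpace.inclusionInDoubleDual ℝ X a.1)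
      (isDistance_ddist K) (ddist_self K) htr hdir hy hyx (fun a => a.2) fun μ ε hε => by
        obtain ⟨w, hw, δ, hμδ, hδw⟩ := hy.exists_eventuallyAbove_inclusion hK hdir μ hε
        exact ⟨⟨w, hw⟩, δ, hμδ, hδw⟩
    exact ⟨J, R, fun Γ => (w Γ).1, hJ, htrR, hdirR, hdom, hwx⟩
  · rintro ⟨ι, r, y, hι, htr, hdir, hy, hyx⟩
    obtain ⟨J, R, π, hJ, htrR, hdirR, hyπ, hπ⟩ := hy.exists_dCauchyN htr hdir
    exact ⟨J, R, y ∘ π, hJ, htrR, hdirR, hyπ, hyx.comp π hπ⟩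
end
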